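/- arXiv:2105.10660 — 4 statements merged into one kernel-verified Lean document; each statement's English description precedes it below -/
import Mathlib

section
/- Let X be a complete metric space and let S, T : X → X be maps such that S is μ-Lipschitz, T is a λ-homothety (i.e. dist(T x, T y) = λ · dist(x, y) for all x, y), μ < λ, and S(X) ⊆ T(X). Then there exists a unique point x ∈ X such that T(x) = S(x). -/
/-!
Choosing for each `x` a preimage `g x ∈ T⁻¹ (S x)` gives `T ∘ g = S`, and since `T` scales
distances by `λ`, the map `g` is `μ / λ`-Lipschitz, hence a contraction. Its Banach fixed point
`x = g x` satisfies `T x = T (g x) = S x`. Two coincidence points `x, y` would satisfy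
`λ · dist x y = dist (S x) (S y) ≤ μ · dist x y`, forcing `x = y`.
-/

section Coincidence

variable {X Y : Type*} [MetricSpace X] [PseudoMetricSpace Y] {S T : X → Y} {μ lam : ℝ}

lemma nonneg_of_forall_dist_le_mul [Nontrivial X] {f : X → Y}
    (hf : ∀ x y, dist (f x) (f y) ≤ μ * dist x y) : 0 ≤ μ := by
  obtain ⟨a, b, hab⟩ := exists_pair_ne X
  exact nonneg_of_mul_nonneg_left (dist_nonneg.trans (hf a b)) (dist_pos.2 hab)

lemma eq_of_coincidence (hS : ∀ x y, dist (S x) (S y) ≤ μ * dist x y)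
    (hT : ∀ x y, dist (T x) (T y) = lam * dist x y) (hμlam : μ < lam)
    {x y : X} (hx : T x = S x) (hy : T y = S y) : x = y := by
  have hle : lam * dist x y ≤ μ * dist x y := by
    simpa only [← hT, hx, hy] using hS x y
  have : dist x y ≤ 0 := by nlinarith [dist_nonneg (x := x) (y := y)]
  exact dist_le_zero.1 this

lemma exists_coincidence [CompleteSpace X] [Nonempty X]
    (hS : ∀ x y, dist (S x) (S y) ≤ μ * dist x y)
    (hT : ∀ x y, dist (T x) (T y) = lam * dist x y) (hμlam : μ < lam) (hlam : 0 < lam)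
    (hrange : Set.range S ⊆ Set.range T) : ∃ x, T x = S x := by
  choose g hg using fun x => hrange ⟨x, rfl⟩
  have hg_lip : ∀ x y, dist (g x) (g y) ≤ μ / lam * dist x y := fun x y => by
    rw [div_mul_eq_mul_div, le_div_iff₀ hlam, mul_comm, ← hT, hg, hg]
    exact hS x y
  have hg_contr : ContractingWith (Real.toNNReal (μ / lam)) g :=
    ⟨Real.toNNReal_lt_one.2 ((div_lt_one hlam).2 hμlam), LipschitzWith.of_dist_le' hg_lip⟩
  refine ⟨ContractingWith.fixedPoint g hg_contr, ?_⟩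
  conv_lhs => rw [← hg_contr.fixedPoint_isFixedPt]
  exact hg _

end Coincidence

/-- **A fixed point theorem** (Proposition 3.1).
If `X` is a complete (nonempty) metric space, `S : X → X` is `μ`-Lipschitz,
`T : X → X` is a `λ`-homothety with `μ < λ`, and `S(X) ⊆ T(X)`, then there
is a unique `x` with `T x = S x`. -/
theorem fixed_point_krasnoselskii {X : Type*} [MetricSpace X] [CompleteSpace X] [Nonempty X]
    (S T : X → X) (μ lam : ℝ)
    (hS : ∀ x y, dist (S x) (S y) ≤ μ * dist x y)
    (hT : ∀ x y, dist (T x) (T y) = lam * dist x y)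
    (hμlam : μ < lam)
    (hrange : Set.range S ⊆ Set.range T) :
    ∃! x : X, T x = S x := by
  refine existsUnique_of_exists_of_unique ?_ fun _ _ => eq_of_coincidence hS hT hμlam
  rcases subsingleton_or_nontrivial X with hX | hX
  · exact ⟨Classical.arbitrary X, Subsingleton.elim _ _⟩
  · have hlam : 0 < lam := (nonneg_of_forall_dist_le_mul hS).trans_lt hμlam
    exact exists_coincidence hS hT hμlam hlam hrange
end

section
/- Let G be a linearly ordered abelian group and let F : ℕ → Set G be an increasing sequence of well-ordered subsets (for the order) such that each Fₙ is closed under addition (a semigroup). Suppose there exists an element w ∈ F₁ with w > 0 such that for every n and every x ∈ F_{n+1} \ Fₙ one has x ≥ (n+1)·w − n·w₀ for a fixed element w₀ with w > w₀ ≥ 0, and the order on G is Archimedean with respect to w − w₀ (i.e. for every g ∈ G there is n with n·(w − w₀) > g). Then the union W = ⋃ₙ Fₙ is well-ordered. -/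
/-! A strictly decreasing sequence in the union starts at some `a`; by the Archimedean
hypothesis the layers `F (n + 1) \ F n` lie entirely above `a` from some `M` on, so the whole
sequence stays in the single well-ordered set `F M`. -/

theorem Set.mem_of_mem_iUnion_of_notMem_sdiff {α : Type*} {F : ℕ → Set α} (hF : Monotone F)
    {x : α} {M : ℕ} (hx : x ∈ ⋃ n, F n) (hnew : ∀ n, M ≤ n → x ∉ F (n + 1) \ F n) :
    x ∈ F M := by
  obtain ⟨k, hk⟩ := Set.mem_iUnion.1 hx
  rcases le_total k M with hkM | hMk
  · exact hF hkM hk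
  · exact Nat.decreasingInduction' (P := fun m => x ∈ F m)
      (fun j _ hMj hj => not_not.1 fun hj' => hnew j hMj ⟨hj, hj'⟩) hMk hk

theorem Set.isWF_iUnion_of_eventually_lt_sdiff {α : Type*} [Preorder α] {F : ℕ → Set α}
    (hF : Monotone F) (hwf : ∀ n, (F n).IsWF)
    (hnew : ∀ a, ∃ M, ∀ n, M ≤ n → ∀ x ∈ F (n + 1) \ F n, a < x) :
    (⋃ n, F n).IsWF := by
  rw [Set.isWF_iff_no_descending_seq]
  intro f hf hmem
  obtain ⟨M, hM⟩ := hnew (f 0)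
  have hle : ∀ n, f n ≤ f 0 := fun n => hf.antitone (Nat.zero_le n)
  exact Set.isWF_iff_no_descending_seq.1 (hwf M) f hf fun n =>
    Set.mem_of_mem_iUnion_of_notMem_sdiff hF (hmem n) fun j hj hx => (hM j hj _ hx).not_ge (hle n)

theorem union_wellOrdered_of_layered_bound_general {G : Type*} [AddCommGroup G] [LinearOrder G] [IsOrderedAddMonoid G]
    (F : ℕ → Set G) (hmono : Monotone F)
    (hwf : ∀ n, (F n).IsWF)
    (w w₀ : G) (hw₀lt : w₀ < w)
    (hbound : ∀ n : ℕ, ∀ x ∈ F (n + 1) \ F n, (n + 1) • w - n • w₀ ≤ x)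
    (harch : ∀ g : G, ∃ n : ℕ, g < n • (w - w₀)) :
    (⋃ n, F n).IsWF := by
  refine Set.isWF_iUnion_of_eventually_lt_sdiff hmono hwf fun a => ?_
  obtain ⟨M, hM⟩ := harch (a - w)
  refine ⟨M, fun n hn x hx => ?_⟩
  calc a = w + (a - w) := by abel
    _ < w + M • (w - w₀) := by gcongr
    _ ≤ w + n • (w - w₀) := by gcongr
    _ = (n + 1) • w - n • w₀ := by rw [smul_sub, succ_nsmul]; abel
    _ ≤ x := hbound n x hx

/-- An increasing union of well-ordered sub-semigroups of a linearly ordered abelian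
group is well-ordered, provided the "new" elements at stage `n+1` are bounded below by
`(n+1) • w − n • w₀` where `w > w₀ ≥ 0` and the order is Archimedean with respect to
`w − w₀`. -/
theorem union_wellOrdered_of_layered_bound {G : Type*} [AddCommGroup G] [LinearOrder G] [IsOrderedAddMonoid G]
    (F : ℕ → Set G) (hmono : Monotone F)
    (hwf : ∀ n, (F n).IsWF)
    (hsemi : ∀ n, ∀ x ∈ F n, ∀ y ∈ F n, x + y ∈ F n)
    (w w₀ : G) (hwF : w ∈ F 1) (hwpos : 0 < w)
    (hw₀nonneg : 0 ≤ w₀) (hw₀lt : w₀ < w)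
    (hbound : ∀ n : ℕ, ∀ x ∈ F (n + 1) \ F n, (n + 1) • w - n • w₀ ≤ x)
    (harch : ∀ g : G, ∃ n : ℕ, g < n • (w - w₀)) :
    (⋃ n, F n).IsWF :=
  union_wellOrdered_of_layered_bound_general F hmono hwf w w₀ hw₀lt hbound harch
end

section
/- Equip ℝ × ℤ with the lexicographic order. Let W₁ ⊆ ℝ_{>1} × ℤ be a well-ordered sub-semigroup, and define inductively W_{n+1} as the semigroup generated by Wₙ together with all elements of the form (β₁ + ⋯ + β_{n+1} − n, m₁ + ⋯ + m_{n+1}) where (βᵢ, mᵢ) ∈ Wₙ and βᵢ > 1 for each i. Then the union W = ⋃ₙ Wₙ is well-ordered, and W satisfies: for all (β₁,m₁),…,(β_r,m_r) ∈ W ∩ (ℝ_{>1} × ℤ) with r ≥ 2, the element (β₁ + ⋯ + β_r − (r−1), m₁ + ⋯ + m_r) belongs to W. -/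
/-!
Write `c = (1, 0)` and `x ∘ y = x + y - c`; the generators of `W_{n+1}` are the iterated
products `x₀ ∘ ⋯ ∘ xₙ`. Shifting by `c` turns `∘` into addition,
`(x ∘ y) - c = (x - c) + (y - c)`, and `x + y - c = (x - c) + (y - c) + c`, so for every `x ∈ W`,
`x - c` lies in the additive monoid generated by the positive elements `W₁ - c` and `c`, which is
well-ordered by Neumann's lemma.
For the closure property it suffices that `W_n ∘ W_n ⊆ W_{n+1}`, which follows by induction on `n`
after writing both factors as sums of generators, since `(u + v) ∘ y = u + (v ∘ y)`.
-/

open Finset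

section AddCommGroup

variable {G : Type*} [AddCommGroup G] {c : G}

theorem sum_sub_nsmul_mem_of_add_sub_mem {U : Set G} (hU : ∀ x ∈ U, ∀ y ∈ U, x + y - c ∈ U) :
    ∀ (k : ℕ) (f : Fin (k + 1) → G), (∀ i, f i ∈ U) → ∑ i, f i - k • c ∈ U
  | 0, f, hf => by simpa using hf 0
  | k + 1, f, hf => by
    have h := hU _ (sum_sub_nsmul_mem_of_add_sub_mem hU k (fun i => f i.castSucc) fun i => hf _)
      _ (hf (Fin.last _))
    rw [Fin.sum_univ_castSucc, succ_nsmul]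
    convert h using 1
    abel

theorem add_sub_mem_of_mem_closure {s : Set G} {T : AddSubsemigroup G} {x y : G} (hsT : s ⊆ T)
    (hs : ∀ z ∈ s, z + y - c ∈ T) (hx : x ∈ AddSubsemigroup.closure s) : x + y - c ∈ T := by
  induction hx using AddSubsemigroup.closure_induction with
  | mem z hz => exact hs z hz
  | add u v hu _ _ hv =>
    rw [show u + v + y - c = u + (v + y - c) by abel]
    exact T.add_mem (AddSubsemigroup.closure_le.2 hsT hu) hv

theorem Set.IsPWO.of_sub_mem_addSubmonoid_closure [PartialOrder G] [IsOrderedAddMonoid G]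
    {S U : Set G} (hS : S.IsPWO) (hc : 0 ≤ c) (hSc : ∀ s ∈ S, c ≤ s)
    (hU : ∀ x ∈ U, x - c ∈ AddSubmonoid.closure ((· - c) '' S ∪ {c})) : U.IsPWO := by
  have hgen : ((· - c) '' S ∪ {c}).IsPWO :=
    (hS.image_of_monotone fun _ _ h => sub_le_sub_right h c).union (Set.isPWO_singleton c)
  have hpos : ∀ x ∈ (· - c) '' S ∪ {c}, 0 ≤ x := by
    rintro _ (⟨s, hs, rfl⟩ | rfl)
    exacts [sub_nonneg.2 (hSc s hs), hc]
  refine ((hgen.addSubmonoid_closure hpos).image_of_monotone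
    (f := (· + c)) fun _ _ h => add_le_add_left h c).mono fun x hx => ?_
  exact ⟨x - c, hU x hx, sub_add_cancel x c⟩

end AddCommGroup

theorem Set.wellFoundedOn_prodLex_iff_isWF {α β : Type*} [Preorder α] [Preorder β]
    {s : Set (α × β)} : s.WellFoundedOn (Prod.Lex (· < ·) (· < ·)) ↔ (toLex '' s).IsWF := by
  rw [Set.IsWF, Set.wellFoundedOn_image]
  rfl

def shiftedSums (S : Set (ℝ × ℤ)) (n : ℕ) : Set (ℝ × ℤ) :=
  {p | ∃ f : Fin (n + 1) → ℝ × ℤ, (∀ i, f i ∈ S ∧ 1 < (f i).1) ∧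
    p = (∑ i, (f i).1 - (n : ℝ), ∑ i, (f i).2)}

theorem prodMk_sum_sub_natCast {ι : Type*} [Fintype ι] (f : ι → ℝ × ℤ) (n : ℕ) :
    ((∑ i, (f i).1 - (n : ℝ), ∑ i, (f i).2) : ℝ × ℤ) = ∑ i, f i - n • (1, 0) := by
  ext <;> simp [Prod.fst_sum, Prod.snd_sum]

namespace shiftedSums

variable {S T : Set (ℝ × ℤ)} {n : ℕ} {p : ℝ × ℤ}

theorem mem_iff : p ∈ shiftedSums S n ↔
    ∃ f : Fin (n + 1) → ℝ × ℤ, (∀ i, f i ∈ S ∧ 1 < (f i).1) ∧ p = ∑ i, f i - n • (1, 0) := by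
  simp only [shiftedSums, Set.mem_ofPred_eq, prodMk_sum_sub_natCast]

theorem mono (h : S ⊆ T) : shiftedSums S n ⊆ shiftedSums T n := by
  rintro p ⟨f, hf, rfl⟩
  exact ⟨f, fun i => ⟨h (hf i).1, (hf i).2⟩, rfl⟩

theorem one_lt_fst (hp : p ∈ shiftedSums S n) : 1 < p.1 := by
  obtain ⟨f, hf, rfl⟩ := hp
  have h : ∑ _i : Fin (n + 1), (1 : ℝ) < ∑ i, (f i).1 :=
    sum_lt_sum_of_nonempty univ_nonempty fun i _ => (hf i).2
  simp only [sum_const, card_univ, Fintype.card_fin, nsmul_eq_mul, mul_one] at h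
  push_cast at h
  linarith

theorem mem_zero {x : ℝ × ℤ} (hx : x ∈ S) (hx1 : 1 < x.1) : x ∈ shiftedSums S 0 :=
  mem_iff.2 ⟨fun _ => x, fun _ => ⟨hx, hx1⟩, by simp⟩

theorem add_sub_mem_succ {y : ℝ × ℤ} (hp : p ∈ shiftedSums S n) (hy : y ∈ S) (hy1 : 1 < y.1) :
    p + y - (1, 0) ∈ shiftedSums S (n + 1) := by
  obtain ⟨f, hf, rfl⟩ := mem_iff.1 hp
  refine mem_iff.2 ⟨Fin.snoc f y, fun i => ?_, ?_⟩
  · induction i using Fin.lastCases with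
    | last => simpa using ⟨hy, hy1⟩
    | cast i => simpa using hf i
  · rw [Fin.sum_univ_castSucc (Fin.snoc f y : Fin (n + 2) → ℝ × ℤ)]
    simp only [Fin.snoc_castSucc, Fin.snoc_last, succ_nsmul]
    abel

end shiftedSums

def IsShiftedSumTower (W : ℕ → Set (ℝ × ℤ)) : Prop :=
  ∀ n, 1 ≤ n → W (n + 1) = (AddSubsemigroup.closure (W n ∪ shiftedSums (W n) n) : Set (ℝ × ℤ))

namespace IsShiftedSumTower

variable {W : ℕ → Set (ℝ × ℤ)}

theorem monotone (hW : IsShiftedSumTower W) :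
    Monotone fun n => W (n + 1) :=
  monotone_nat_of_le_succ fun n => by
    rw [hW (n + 1) n.succ_pos]
    exact Set.subset_union_left.trans AddSubsemigroup.subset_closure

theorem one_lt_fst (hW : IsShiftedSumTower W) (hW1 : W 1 ⊆ {p | 1 < p.1}) :
    ∀ n, ∀ x ∈ W (n + 1), 1 < x.1
  | 0, _, hx => hW1 hx
  | n + 1, x, hx => by
    rw [hW (n + 1) n.succ_pos] at hx
    induction hx using AddSubsemigroup.closure_induction with
    | mem z hz => exact hz.elim (hW.one_lt_fst hW1 n z) shiftedSums.one_lt_fst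
    | add u v _ _ hu hv => exact lt_add_of_lt_of_pos hu (zero_lt_one.trans hv)

theorem add_sub_mem (hW : IsShiftedSumTower W) (hW1 : W 1 ⊆ {p | 1 < p.1}) :
    ∀ n, ∀ x ∈ W (n + 1), ∀ y ∈ W (n + 1), x + y - (1, 0) ∈ W (n + 2)
  | 0, x, hx, y, hy => by
    rw [hW 1 le_rfl]
    exact AddSubsemigroup.subset_closure <| Or.inr <|
      shiftedSums.add_sub_mem_succ (shiftedSums.mem_zero hx (hW1 hx)) hy (hW1 hy)
  | n + 1, x, hx, y, hy => by
    set T := AddSubsemigroup.closure (W (n + 2) ∪ shiftedSums (W (n + 2)) (n + 2))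
    have hW2T : W (n + 2) ⊆ T := Set.subset_union_left.trans AddSubsemigroup.subset_closure
    have hmono : W (n + 1) ⊆ W (n + 2) := hW.monotone n.le_succ
    have hgen : W (n + 1) ∪ shiftedSums (W (n + 1)) (n + 1) ⊆ W (n + 2) := by
      rw [hW (n + 1) n.succ_pos]
      exact AddSubsemigroup.subset_closure
    have hsnoc : ∀ p ∈ shiftedSums (W (n + 1)) (n + 1), ∀ z ∈ W (n + 2), p + z - (1, 0) ∈ T :=
      fun p hp z hz => AddSubsemigroup.subset_closure <| Or.inr <| shiftedSums.add_sub_mem_succ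
        (shiftedSums.mono hmono hp) hz (hW.one_lt_fst hW1 _ z hz)
    rw [hW (n + 2) (by omega)]
    refine add_sub_mem_of_mem_closure (hgen.trans hW2T) (fun g hg => ?_)
      ((hW (n + 1) n.succ_pos).subset hx)
    rcases hg with hg | hg
    · rw [add_comm g]
      refine add_sub_mem_of_mem_closure (hgen.trans hW2T) (fun h hh => ?_)
        ((hW (n + 1) n.succ_pos).subset hy)
      rcases hh with hh | hh
      · exact hW2T (hW.add_sub_mem hW1 n h hh g hg)
      · exact hsnoc h hh g (hmono hg)
    · exact hsnoc g hg y hy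

theorem add_sub_mem_iUnion (hW : IsShiftedSumTower W) (hW1 : W 1 ⊆ {p | 1 < p.1}) :
    ∀ x ∈ ⋃ n, W (n + 1), ∀ y ∈ ⋃ n, W (n + 1), x + y - (1, 0) ∈ ⋃ n, W (n + 1) := by
  intro x hx y hy
  obtain ⟨m, hm⟩ := Set.mem_iUnion.1 hx
  obtain ⟨k, hk⟩ := Set.mem_iUnion.1 hy
  have hmono := hW.monotone
  exact Set.mem_iUnion.2 ⟨max m k + 1, hW.add_sub_mem hW1 _
    x (hmono (le_max_left m k) hm) y (hmono (le_max_right m k) hk)⟩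

theorem toLex_sub_mem_closure (hW : IsShiftedSumTower W) :
    ∀ n, ∀ x ∈ W (n + 1), toLex x - toLex (1, 0) ∈ AddSubmonoid.closure
      ((· - toLex ((1 : ℝ), (0 : ℤ))) '' (toLex '' W 1) ∪ {toLex (1, 0)})
  | 0, x, hx => AddSubmonoid.subset_closure (Or.inl ⟨toLex x, ⟨x, hx, rfl⟩, rfl⟩)
  | n + 1, x, hx => by
    set c := toLex ((1 : ℝ), (0 : ℤ))
    set M := AddSubmonoid.closure ((· - c) '' (toLex '' W 1) ∪ {c})
    rw [hW (n + 1) n.succ_pos] at hx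
    induction hx using AddSubsemigroup.closure_induction with
    | mem z hz =>
      rcases hz with hz | hz
      · exact hW.toLex_sub_mem_closure n z hz
      · obtain ⟨f, hf, rfl⟩ := shiftedSums.mem_iff.1 hz
        refine sum_sub_nsmul_mem_of_add_sub_mem (c := c) (U := {y | y - c ∈ M})
          (fun a ha b hb => ?_) (n + 1) (fun i => toLex (f i))
          fun i => hW.toLex_sub_mem_closure n _ (hf i).1
        rw [Set.mem_ofPred_eq, show a + b - c - c = (a - c) + (b - c) by abel]
        exact M.add_mem ha hb
    | add u v _ _ hu hv =>
      rw [toLex_add, show toLex u + toLex v - c = (toLex u - c) + (toLex v - c) + c by abel]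
      exact M.add_mem (M.add_mem hu hv) (AddSubmonoid.subset_closure (Or.inr rfl))

theorem isPWO_image_toLex_iUnion (hW : IsShiftedSumTower W)
    (hW1wf : (W 1).WellFoundedOn (Prod.Lex (· < ·) (· < ·))) (hW1 : W 1 ⊆ {p | 1 < p.1}) :
    (toLex '' ⋃ n, W (n + 1)).IsPWO := by
  refine (Set.wellFoundedOn_prodLex_iff_isWF.1 hW1wf).isPWO.of_sub_mem_addSubmonoid_closure
    (Prod.Lex.toLex_lt_toLex.2 (Or.inl one_pos) : toLex ((0 : ℝ), (0 : ℤ)) < toLex (1, 0)).le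
    ?_ ?_
  · rintro _ ⟨s, hs, rfl⟩
    exact (Prod.Lex.toLex_lt_toLex.2 (Or.inl (hW1 hs))).le
  · rintro _ ⟨x, hx, rfl⟩
    obtain ⟨n, hn⟩ := Set.mem_iUnion.1 hx
    exact hW.toLex_sub_mem_closure n x hn

end IsShiftedSumTower

open Finset in
theorem union_semigroups_wellOrdered_general
    (W : ℕ → Set (ℝ × ℤ))
    (hW1wf : (W 1).WellFoundedOn (Prod.Lex (· < ·) (· < ·)))
    (hW1sub : W 1 ⊆ {p : ℝ × ℤ | 1 < p.1})
    (hWsucc : ∀ n : ℕ, 1 ≤ n →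
      W (n + 1) = (AddSubsemigroup.closure (W n ∪
        {p : ℝ × ℤ | ∃ f : Fin (n + 1) → ℝ × ℤ,
          (∀ i, f i ∈ W n ∧ 1 < (f i).1) ∧
          p = (∑ i, (f i).1 - (n : ℝ), ∑ i, (f i).2)}) : Set (ℝ × ℤ))) :
    (⋃ n, W (n + 1)).WellFoundedOn (Prod.Lex (· < ·) (· < ·)) ∧
    ∀ r : ℕ, 2 ≤ r → ∀ f : Fin r → ℝ × ℤ,
      (∀ i, f i ∈ (⋃ n, W (n + 1)) ∧ 1 < (f i).1) →
      ((∑ i, (f i).1 - ((r : ℝ) - 1), ∑ i, (f i).2) : ℝ × ℤ) ∈ ⋃ n, W (n + 1) := by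
  have hW : IsShiftedSumTower W := hWsucc
  refine ⟨?_, fun r _ f hf => ?_⟩
  · exact Set.wellFoundedOn_prodLex_iff_isWF.2
      (hW.isPWO_image_toLex_iUnion hW1wf hW1sub).isWF
  · obtain ⟨k, rfl⟩ : ∃ k, r = k + 1 := ⟨r - 1, by omega⟩
    rw [Nat.cast_succ, add_sub_cancel_right, prodMk_sum_sub_natCast]
    exact sum_sub_nsmul_mem_of_add_sub_mem (hW.add_sub_mem_iUnion hW1sub) k f
      fun i => (hf i).1

open Finset in
/-- Proposition 5.2 of the paper (case `k = 1`). `ℝ × ℤ` carries the lexicographic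
order. Starting from a well-ordered sub-semigroup `W₁ ⊆ ℝ_{>1} × ℤ`, define
`W_{n+1}` as the semigroup generated by `Wₙ` together with all elements
`(β₁ + ⋯ + β_{n+1} − n, m₁ + ⋯ + m_{n+1})` with `(βᵢ, mᵢ) ∈ Wₙ`, `βᵢ > 1`.
Then the union `W = ⋃ₙ Wₙ` is well-ordered and is closed under the operation
`(β₁,m₁),…,(β_r,m_r) ↦ (β₁ + ⋯ + β_r − (r−1), m₁ + ⋯ + m_r)` for `r ≥ 2` and
elements with first coordinate `> 1`. -/
theorem union_semigroups_wellOrdered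
    (W : ℕ → Set (ℝ × ℤ))
    (hW1wf : (W 1).WellFoundedOn (Prod.Lex (· < ·) (· < ·)))
    (hW1sub : W 1 ⊆ {p : ℝ × ℤ | 1 < p.1})
    (hW1semi : ∀ x ∈ W 1, ∀ y ∈ W 1, x + y ∈ W 1)
    (hWsucc : ∀ n : ℕ, 1 ≤ n →
      W (n + 1) = (AddSubsemigroup.closure (W n ∪
        {p : ℝ × ℤ | ∃ f : Fin (n + 1) → ℝ × ℤ,
          (∀ i, f i ∈ W n ∧ 1 < (f i).1) ∧
          p = (∑ i, (f i).1 - (n : ℝ), ∑ i, (f i).2)}) : Set (ℝ × ℤ))) :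
    (⋃ n, W (n + 1)).WellFoundedOn (Prod.Lex (· < ·) (· < ·)) ∧
    ∀ r : ℕ, 2 ≤ r → ∀ f : Fin r → ℝ × ℤ,
      (∀ i, f i ∈ (⋃ n, W (n + 1)) ∧ 1 < (f i).1) →
      ((∑ i, (f i).1 - ((r : ℝ) - 1), ∑ i, (f i).2) : ℝ × ℤ) ∈ ⋃ n, W (n + 1) :=
  union_semigroups_wellOrdered_general W hW1wf hW1sub hWsucc
end

section
/- Let k ∈ ℕ and let 𝓛ₖ be the set of functions f : ℝ_{≥0} × ℤᵏ → ℝ whose support is well-ordered for the lexicographic order. Define d_z(f, g) = 2^{−ord_z(f − g)} for f ≠ g (where ord_z(h) is the minimum of the first coordinates of elements of the support of h) and d_z(f, f) = 0. Then (𝓛ₖ, d_z) is a complete metric space. -/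
/-!
`d_z(f, g) ≤ 2^{-x}` says that `f` and `g` have the same coefficients at all `z`-exponents
below `x`; this makes `d_z` an ultrametric. A Cauchy sequence therefore stabilises on every
initial segment `{z-exponent ≤ x}`, and the limit is read off coefficientwise. Below any `x`
the limit coincides with a member of the sequence, so its support is well-ordered: a
descending chain in it never leaves the initial segment cut out by its first term.
-/

/-- The lexicographic order relation on `ℝ × ℤᵏ`. -/
def rlex (k : ℕ) : (ℝ × (Fin k → ℤ)) → (ℝ × (Fin k → ℤ)) → Prop :=
  Prod.Lex (· < ·) (Pi.Lex (· < ·) (@fun _ => (· < ·)))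

/-- `f` represents an element of `𝓛ₖ`: its support is well-ordered for the
lexicographic order and is contained in `ℝ_{≥0} × ℤᵏ`. -/
def memL (k : ℕ) (f : ℝ × (Fin k → ℤ) → ℝ) : Prop :=
  {p | f p ≠ 0}.WellFoundedOn (rlex k) ∧ ∀ p, f p ≠ 0 → 0 ≤ p.1

open scoped Classical in
/-- The valuation distance `d_z(f,g) = 2^{-ord_z(f-g)}`, where `ord_z` is the least
first coordinate appearing in the support of `f - g`. -/
noncomputable def dz (k : ℕ) (f g : ℝ × (Fin k → ℤ) → ℝ) : ℝ :=
  if f = g then 0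
  else (2 : ℝ) ^ (-sInf {x : ℝ | ∃ m : Fin k → ℤ, f (x, m) ≠ g (x, m)})

theorem Set.wellFoundedOn_of_wellFoundedOn_sublevel {α β : Type*} [Preorder β]
    {r : α → α → Prop} {s : Set α} (φ : α → β) (hφ : ∀ a b, r a b → φ a ≤ φ b)
    (h : ∀ q ∈ s, {p ∈ s | φ p ≤ φ q}.WellFoundedOn r) : s.WellFoundedOn r := by
  refine ⟨fun ⟨q, hq⟩ => ?_⟩
  suffices ∀ a : {p ∈ s | φ p ≤ φ q}, Acc (Subrel r (· ∈ s)) ⟨a, a.2.1⟩ from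
    this ⟨q, hq, le_rfl⟩
  intro a
  induction a using WellFounded.induction (h q hq) with
  | _ a ih => exact Acc.intro _ fun b hba => ih ⟨b, b.2, (hφ _ _ hba).trans a.2.2⟩ hba

theorem rlex_fst_le {k : ℕ} {p q : ℝ × (Fin k → ℤ)} (h : rlex k p q) : p.1 ≤ q.1 := by
  rcases Prod.lex_iff.mp h with h | ⟨h, -⟩
  exacts [h.le, h.le]

namespace Lk

variable {k : ℕ} {f g h : ℝ × (Fin k → ℤ) → ℝ}

/-- `ord_z (f - g)` is the infimum of this set. -/
def zExpsNe (f g : ℝ × (Fin k → ℤ) → ℝ) : Set ℝ :=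
  {x | ∃ m : Fin k → ℤ, f (x, m) ≠ g (x, m)}

theorem dz_of_ne (hfg : f ≠ g) : dz k f g = 2 ^ (-sInf (zExpsNe f g)) := by
  rw [dz, if_neg hfg, zExpsNe]

theorem dz_self (f : ℝ × (Fin k → ℤ) → ℝ) : dz k f f = 0 :=
  if_pos rfl

theorem dz_nonneg (f g : ℝ × (Fin k → ℤ) → ℝ) : 0 ≤ dz k f g := by
  rcases eq_or_ne f g with rfl | hfg
  · rw [dz_self]
  · rw [dz_of_ne hfg]
    positivity

theorem dz_eq_zero_iff : dz k f g = 0 ↔ f = g := by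
  refine ⟨fun h => ?_, fun h => h ▸ dz_self f⟩
  by_contra hfg
  rw [dz_of_ne hfg] at h
  exact (Real.rpow_pos_of_pos two_pos _).ne' h

theorem zExpsNe_comm (f g : ℝ × (Fin k → ℤ) → ℝ) : zExpsNe f g = zExpsNe g f := by
  simp only [zExpsNe, ne_comm]

theorem dz_comm (f g : ℝ × (Fin k → ℤ) → ℝ) : dz k f g = dz k g f := by
  rcases eq_or_ne f g with rfl | hfg
  · rfl
  · rw [dz_of_ne hfg, dz_of_ne hfg.symm, zExpsNe_comm]

theorem zExpsNe_nonempty (hfg : f ≠ g) : (zExpsNe f g).Nonempty := by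
  obtain ⟨p, hp⟩ := Function.ne_iff.mp hfg
  exact ⟨p.1, p.2, hp⟩

theorem zExpsNe_bddBelow (hf : memL k f) (hg : memL k g) : BddBelow (zExpsNe f g) := by
  refine ⟨0, fun x ⟨m, hm⟩ => ?_⟩
  by_cases hf0 : f (x, m) = 0
  · exact hg.2 (x, m) fun hg0 => hm (hf0.trans hg0.symm)
  · exact hf.2 (x, m) hf0

theorem zExpsNe_subset_union (f g h : ℝ × (Fin k → ℤ) → ℝ) :
    zExpsNe f h ⊆ zExpsNe f g ∪ zExpsNe g h := by
  rintro x ⟨m, hm⟩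
  by_cases hfg : f (x, m) = g (x, m)
  · exact Or.inr ⟨m, fun hgh => hm (hfg.trans hgh)⟩
  · exact Or.inl ⟨m, hfg⟩

theorem dz_le_max (hf : memL k f) (hg : memL k g) (hh : memL k h) :
    dz k f h ≤ max (dz k f g) (dz k g h) := by
  rcases eq_or_ne f g with rfl | hfg
  · exact le_max_right _ _
  rcases eq_or_ne g h with rfl | hgh
  · exact le_max_left _ _
  rcases eq_or_ne f h with rfl | hfh
  · exact (dz_self f).trans_le ((dz_nonneg f g).trans (le_max_left _ _))
  have hmin : min (sInf (zExpsNe f g)) (sInf (zExpsNe g h)) ≤ sInf (zExpsNe f h) := by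
    refine le_csInf (zExpsNe_nonempty hfh) fun x hx => ?_
    rcases zExpsNe_subset_union f g h hx with hx | hx
    · exact min_le_of_left_le (csInf_le (zExpsNe_bddBelow hf hg) hx)
    · exact min_le_of_right_le (csInf_le (zExpsNe_bddBelow hg hh) hx)
  rw [dz_of_ne hfg, dz_of_ne hgh, dz_of_ne hfh]
  rcases min_le_iff.mp hmin with hle | hle
  · exact le_max_of_le_left (Real.rpow_le_rpow_of_exponent_le one_le_two (neg_le_neg hle))
  · exact le_max_of_le_right (Real.rpow_le_rpow_of_exponent_le one_le_two (neg_le_neg hle))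

theorem dz_triangle (hf : memL k f) (hg : memL k g) (hh : memL k h) :
    dz k f h ≤ dz k f g + dz k g h :=
  (dz_le_max hf hg hh).trans (max_le_add_of_nonneg (dz_nonneg f g) (dz_nonneg g h))

theorem eq_of_dz_lt (hf : memL k f) (hg : memL k g) {x : ℝ} (hfg : dz k f g < 2 ^ (-x))
    (p : ℝ × (Fin k → ℤ)) (hp : p.1 ≤ x) : f p = g p := by
  by_contra hne
  have hfg' : f ≠ g := fun h => hne (congrFun h p)
  rw [dz_of_ne hfg', Real.rpow_lt_rpow_left_iff one_lt_two, neg_lt_neg_iff] at hfg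
  have : sInf (zExpsNe f g) ≤ p.1 := csInf_le (zExpsNe_bddBelow hf hg) ⟨p.2, hne⟩
  linarith

theorem dz_le_of_eq {x : ℝ} (hfg : ∀ p : ℝ × (Fin k → ℤ), p.1 ≤ x → f p = g p) :
    dz k f g ≤ 2 ^ (-x) := by
  rcases eq_or_ne f g with rfl | hne
  · rw [dz_self]
    positivity
  rw [dz_of_ne hne, Real.rpow_le_rpow_left_iff one_lt_two, neg_le_neg_iff]
  refine le_csInf (zExpsNe_nonempty hne) fun y ⟨m, hm⟩ => ?_
  by_contra! hy
  exact hm (hfg (y, m) hy.le)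

theorem memL_of_forall_eq_memL
    (hf : ∀ x : ℝ, ∃ g, memL k g ∧ ∀ p : ℝ × (Fin k → ℤ), p.1 ≤ x → f p = g p) :
    memL k f := by
  refine ⟨Set.wellFoundedOn_of_wellFoundedOn_sublevel Prod.fst
    (fun _ _ => rlex_fst_le) fun q _ => ?_, fun p hp => ?_⟩
  · obtain ⟨g, hg, hfg⟩ := hf q.1
    exact hg.1.subset fun p ⟨hp, hpq⟩ => (hfg p hpq).symm.trans_ne hp
  · obtain ⟨g, hg, hfg⟩ := hf p.1
    exact hg.2 p ((hfg p le_rfl).symm.trans_ne hp)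

theorem exists_two_rpow_neg_lt {ε : ℝ} (hε : 0 < ε) : ∃ x : ℝ, (2 : ℝ) ^ (-x) < ε := by
  obtain ⟨y, hy⟩ :=
    ((tendsto_rpow_atBot_of_base_gt_one 2 one_lt_two).eventually (gt_mem_nhds hε)).exists
  exact ⟨-y, by rwa [neg_neg]⟩

theorem exists_tendsto_of_cauchy {u : ℕ → ℝ × (Fin k → ℤ) → ℝ} (hu : ∀ n, memL k (u n))
    (hcauchy : ∀ ε > 0, ∃ N : ℕ, ∀ m ≥ N, ∀ n ≥ N, dz k (u m) (u n) < ε) :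
    ∃ f, memL k f ∧ ∀ ε > 0, ∃ N : ℕ, ∀ n ≥ N, dz k (u n) f < ε := by
  have hstable (x : ℝ) : ∃ N : ℕ, ∀ m ≥ N, ∀ n ≥ N,
      ∀ p : ℝ × (Fin k → ℤ), p.1 ≤ x → u m p = u n p := by
    obtain ⟨N, hN⟩ := hcauchy _ (Real.rpow_pos_of_pos two_pos (-x))
    exact ⟨N, fun m hm n hn => eq_of_dz_lt (hu m) (hu n) (hN m hm n hn)⟩
  choose N hN using hstable
  set f : ℝ × (Fin k → ℤ) → ℝ := fun p => u (N p.1) p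
  have hlim (x : ℝ) (n : ℕ) (hn : N x ≤ n) (p : ℝ × (Fin k → ℤ)) (hp : p.1 ≤ x) :
      u n p = f p :=
    (hN x n hn _ (le_max_left _ _) p hp).trans
      (hN p.1 _ (le_max_right _ _) _ le_rfl p le_rfl)
  refine ⟨f, memL_of_forall_eq_memL fun x => ⟨u (N x), hu _, fun p hp => ?_⟩, fun ε hε => ?_⟩
  · exact (hlim x _ le_rfl p hp).symm
  · obtain ⟨x, hx⟩ := exists_two_rpow_neg_lt hε
    exact ⟨N x, fun n hn => (dz_le_of_eq (hlim x n hn)).trans_lt hx⟩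

end Lk

/-- Proposition 3.5: `(𝓛ₖ, d_z)` is a complete metric space. -/
theorem Lk_complete_metric (k : ℕ) :
    (∀ f g, memL k f → memL k g → (dz k f g = 0 ↔ f = g)) ∧
    (∀ f g, dz k f g = dz k g f) ∧
    (∀ f g h, memL k f → memL k g → memL k h → dz k f h ≤ dz k f g + dz k g h) ∧
    (∀ u : ℕ → (ℝ × (Fin k → ℤ) → ℝ), (∀ n, memL k (u n)) →
      (∀ ε > 0, ∃ N : ℕ, ∀ m ≥ N, ∀ n ≥ N, dz k (u m) (u n) < ε) →
      ∃ f, memL k f ∧ ∀ ε > 0, ∃ N : ℕ, ∀ n ≥ N, dz k (u n) f < ε) :=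
  ⟨fun _ _ _ _ => Lk.dz_eq_zero_iff, Lk.dz_comm, fun _ _ _ => Lk.dz_triangle,
    fun _ => Lk.exists_tendsto_of_cauchy⟩
end
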